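/- Let R be a rational map of degree D ≥ 2 over an algebraically closed field of characteristic 0. After replacing R by a suitable iterate R^m (m ≥ 1), every point y ∈ ℙ¹ not in the exceptional set E satisfies deg_{R^m}(y) < D^m, where E is the set of points totally invariant under R or R². -/

import Mathlib

open Polynomial Classical
noncomputable section

namespace P1

variable {K : Type*} [Field K]

/-- Eliminator for `OnePoint K` (which is `Option K`). -/
noncomputable def pelim {α : Type*} (x : OnePoint K) (i : α) (f : K → α) : α :=
  Option.elim x i f

/-- The degree of a rational map, as the max of the degrees of its
numerator and denominator (written in lowest terms). -/
noncomputable def degree (R : RatFunc K) : ℕ := max R.num.natDegree R.denom.natDegree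

/-- The action of a rational map on the projective line `ℙ¹(K) = K ∪ {∞}`. -/
noncomputable def eval1 (R : RatFunc K) : OnePoint K → OnePoint K :=
  fun x => pelim x
    (if R.num.natDegree < R.denom.natDegree then ((0 : K) : OnePoint K)
     else if R.denom.natDegree < R.num.natDegree then OnePoint.infty
     else ((R.num.leadingCoeff / R.denom.leadingCoeff : K) : OnePoint K))
    (fun z => if R.denom.eval z = 0 then OnePoint.infty
      else ((R.num.eval z / R.denom.eval z : K) : OnePoint K))

/-- The local degree (ramification index) of a rational map at a point of `ℙ¹(K)`. -/
noncomputable def locDeg (R : RatFunc K) : OnePoint K → ℕ :=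
  fun x => pelim x
    (if R.denom.natDegree < R.num.natDegree then R.num.natDegree - R.denom.natDegree
     else if R.num.natDegree < R.denom.natDegree then R.denom.natDegree - R.num.natDegree
     else rootMultiplicity (0 : K)
       (R.denom.leadingCoeff • R.num.reverse - R.num.leadingCoeff • R.denom.reverse))
    (fun a => if R.denom.eval a = 0 then rootMultiplicity a R.denom
      else rootMultiplicity a (R.num - Polynomial.C (R.num.eval a / R.denom.eval a) * R.denom))

/-- The local degree of the `n`-th iterate of `R`, via multiplicativity of
local degrees along orbits. -/
noncomputable def locDegIter (R : RatFunc K) (n : ℕ) (y : OnePoint K) : ℕ :=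
  ∏ k ∈ Finset.range n, locDeg R ((eval1 R)^[k] y)

/-- The Möbius transformation `z ↦ (a z + b)/(c z + d)` of `ℙ¹(K)`. -/
noncomputable def mobius (a b c d : K) : OnePoint K → OnePoint K :=
  fun x => pelim x
    (if c = 0 then OnePoint.infty else ((a / c : K) : OnePoint K))
    (fun z => if c * z + d = 0 then OnePoint.infty
      else (((a * z + b) / (c * z + d) : K) : OnePoint K))

/-- A self-map of `ℙ¹(K)` is a Möbius transformation (an element of `PGL(2,K)`). -/
def IsMobius (φ : OnePoint K → OnePoint K) : Prop :=
  ∃ a b c d : K, a * d - b * c ≠ 0 ∧ φ = mobius a b c d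

/-- The power map `z ↦ z^D` on `ℙ¹(K)`. -/
noncomputable def powMap (D : ℕ) : OnePoint K → OnePoint K :=
  fun x => pelim x OnePoint.infty (fun z => ((z ^ D : K) : OnePoint K))

/-- The map `z ↦ z^{-D}` on `ℙ¹(K)`. -/
noncomputable def powMapInv (D : ℕ) : OnePoint K → OnePoint K :=
  fun x => pelim x ((0 : K) : OnePoint K)
    (fun z => if z = 0 then OnePoint.infty else (((z ^ D)⁻¹ : K) : OnePoint K))

/-- The map `z ↦ P(z)` on `ℙ¹(K)` induced by a polynomial `P` (with `∞ ↦ ∞`). -/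
noncomputable def polyMap (P : Polynomial K) : OnePoint K → OnePoint K :=
  fun x => pelim x OnePoint.infty (fun z => ((P.eval z : K) : OnePoint K))

end P1
end

/-!
If `locDeg R x = D`, the polynomial `N - w Q` cutting out the fibre of `R = N / Q` over `w = R x`
is `c (X - x) ^ D`, so `R⁻¹{R x} = {x}`. Each such finite point is a root of order `D - 1` of the
Wronskian `Q N' - Q' N`, which is nonzero in characteristic zero and has degree at most `2 D - 2`,
and at most `D - 1` when `locDeg R ∞ = D`; so at most two points have local degree `D`. If
`y`, `R y`, `R² y` all have local degree `D`, two of them coincide, which makes `y` totally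
invariant under `R` or `R²`; otherwise `deg_{R³}(y) < D³`.
-/

namespace Polynomial

variable {R : Type*} [CommRing R]

lemma wronskian_sub_C_mul_self_right (a b : R[X]) (c : R) :
    wronskian a (b - C c * a) = wronskian a b := by
  simp only [wronskian, derivative_sub, derivative_C_mul]
  ring

lemma pow_sub_one_dvd_wronskian_left {p a : R[X]} {n : ℕ} (h : p ^ n ∣ a) (b : R[X]) :
    p ^ (n - 1) ∣ wronskian a b :=
  dvd_sub ((pow_dvd_pow p (n.sub_le 1)).trans h |>.mul_right _)
    ((pow_sub_one_dvd_derivative_of_pow_dvd h).mul_right _)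

lemma pow_sub_one_dvd_wronskian_right {p b : R[X]} {n : ℕ} (h : p ^ n ∣ b) (a : R[X]) :
    p ^ (n - 1) ∣ wronskian a b := by
  rw [← wronskian_neg_eq, dvd_neg]
  exact pow_sub_one_dvd_wronskian_left h a

lemma natDegree_wronskian_le (a b : R[X]) :
    (wronskian a b).natDegree ≤ a.natDegree + b.natDegree - 1 := by
  by_cases hw : wronskian a b = 0
  · simp [hw]
  · have := natDegree_wronskian_lt_add hw
    omega

lemma natDegree_sub_C_leadingCoeff_mul_lt {p q : R[X]} (hq : q.Monic)
    (hpq : p.natDegree = q.natDegree) (hq0 : q.natDegree ≠ 0) :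
    (p - C p.leadingCoeff * q).natDegree < q.natDegree := by
  have hle : (p - C p.leadingCoeff * q).natDegree ≤ q.natDegree :=
    (natDegree_sub_le _ _).trans (max_le hpq.le (natDegree_C_mul_le _ _))
  have hcoeff : (p - C p.leadingCoeff * q).coeff q.natDegree = 0 := by
    rw [coeff_sub, coeff_C_mul, hq.coeff_natDegree, ← hpq, coeff_natDegree, mul_one, sub_self]
  have := natDegree_le_pred hle hcoeff
  omega

variable {K : Type*} [Field K]

lemma rootMultiplicity_le_natDegree (p : K[X]) (a : K) : rootMultiplicity a p ≤ p.natDegree := by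
  classical
  rw [← count_roots]
  exact (Multiset.count_le_card _ _).trans (card_roots' p)

lemma natDegree_eq_zero_of_le_rootMultiplicity_zero_reflect {p : K[X]} {n : ℕ}
    (hdeg : p.natDegree ≤ n) (h : n ≤ rootMultiplicity 0 (reflect n p)) : p.natDegree = 0 := by
  rcases eq_or_ne p 0 with rfl | hp
  · rfl
  have hdvd : X ^ n ∣ reflect n p := by
    simpa using (le_rootMultiplicity_iff (by rwa [Ne, reflect_eq_zero_iff])).mp h
  have hreflect := eq_mul_leadingCoeff_of_monic_of_dvd_of_natDegree_le (monic_X_pow n) hdvd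
    (natDegree_reflect_le.trans (by simp [hdeg]))
  apply_fun reflect n at hreflect
  rw [reflect_reflect, mul_comm, reflect_C_mul_X_pow, revAt_le le_rfl, Nat.sub_self, pow_zero,
    mul_one] at hreflect
  rw [hreflect, natDegree_C]

end Polynomial

namespace Finset

lemma prod_lt_pow_card {ι : Type*} {s : Finset ι} {f : ι → ℕ} {n : ℕ}
    (hle : ∀ i ∈ s, f i ≤ n) (hlt : ∃ i ∈ s, f i < n) :
    ∏ i ∈ s, f i < n ^ s.card := by
  obtain ⟨j, hj, hjn⟩ := hlt
  by_cases hzero : ∃ i ∈ s, f i = 0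
  · rw [prod_eq_zero_iff.mpr hzero]
    exact pow_pos (by omega) _
  · push Not at hzero
    rw [← prod_const]
    exact prod_lt_prod (fun i hi => Nat.pos_of_ne_zero (hzero i hi)) hle ⟨j, hj, hjn⟩

end Finset

namespace P1

open OnePoint

variable {K : Type*} [Field K] (R : RatFunc K)

/-- `fiberPoly R w = N - w Q` for `R = N / Q` in lowest terms, and `Q` for `w = ∞`: its roots
are the finite points of `R⁻¹{w}`, and `∞ ∈ R⁻¹{w}` exactly when its degree is below
`degree R`. -/
noncomputable def fiberPoly (w : OnePoint K) : K[X] := w.elim R.denom fun v => R.num - C v * R.denom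

@[simp] lemma fiberPoly_infty : fiberPoly R ∞ = R.denom := rfl

@[simp] lemma fiberPoly_coe (v : K) : fiberPoly R v = R.num - C v * R.denom := rfl

lemma natDegree_num_le_degree : R.num.natDegree ≤ degree R := le_max_left _ _

lemma natDegree_denom_le_degree : R.denom.natDegree ≤ degree R := le_max_right _ _

lemma natDegree_fiberPoly_le (w : OnePoint K) : (fiberPoly R w).natDegree ≤ degree R := by
  cases w with
  | infty => exact natDegree_denom_le_degree R
  | coe v =>
    exact (natDegree_sub_le _ _).trans (max_le (natDegree_num_le_degree R)
      ((natDegree_C_mul_le _ _).trans (natDegree_denom_le_degree R)))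

lemma locDeg_coe (a : K) : locDeg R a = rootMultiplicity a (fiberPoly R (eval1 R a)) := by
  dsimp only [locDeg, eval1, pelim, OnePoint.some, Option.elim]
  by_cases ha : R.denom.eval a = 0 <;> simp only [ha, if_true, if_false] <;> rfl

variable {R}

lemma locDeg_infty_of_natDegree_eq (h : R.num.natDegree = R.denom.natDegree) :
    locDeg R ∞ = rootMultiplicity 0 (reflect (degree R) (fiberPoly R (eval1 R ∞))) := by
  have hdenom : degree R = R.denom.natDegree := by simp [degree, h]
  unfold locDeg eval1 pelim
  simp only [lt_irrefl, if_false, h, Option.elim, fiberPoly_coe, R.monic_denom.leadingCoeff,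
    div_one, one_smul, reflect_sub, reflect_C_mul, smul_eq_C_mul, reverse]
  rw [hdenom]

variable (R) in
lemma locDeg_le_degree (x : OnePoint K) : locDeg R x ≤ degree R := by
  cases x with
  | coe a =>
    rw [locDeg_coe]
    exact (rootMultiplicity_le_natDegree _ a).trans (natDegree_fiberPoly_le R _)
  | infty =>
    by_cases h : R.num.natDegree = R.denom.natDegree
    · rw [locDeg_infty_of_natDegree_eq h]
      exact (rootMultiplicity_le_natDegree _ _).trans
        (natDegree_reflect_le.trans (max_le le_rfl (natDegree_fiberPoly_le R _)))
    · have hnd := natDegree_num_le_degree R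
      have hdd := natDegree_denom_le_degree R
      unfold locDeg pelim
      split_ifs <;> simp only [Option.elim] <;> omega

lemma natDegree_fiberPoly_eval1_infty_lt (hR : degree R ≠ 0) :
    (fiberPoly R (eval1 R ∞)).natDegree < degree R := by
  have hnd := natDegree_num_le_degree R
  have hdd := natDegree_denom_le_degree R
  have hmax : degree R = max R.num.natDegree R.denom.natDegree := rfl
  unfold eval1 pelim
  split_ifs with hlt hgt
  · simp only [Option.elim, fiberPoly_coe, map_zero, zero_mul, sub_zero]
    omega
  · simp only [Option.elim, fiberPoly_infty]
    omega
  · have heq : R.num.natDegree = R.denom.natDegree := by omega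
    simp only [Option.elim, fiberPoly_coe, R.monic_denom.leadingCoeff, div_one]
    convert natDegree_sub_C_leadingCoeff_mul_lt R.monic_denom heq (by omega) using 1
    omega

lemma fiberPoly_ne_zero (hR : degree R ≠ 0) (w : OnePoint K) : fiberPoly R w ≠ 0 := by
  cases w with
  | infty => exact R.denom_ne_zero
  | coe v =>
    intro h
    have hdvd : R.denom ∣ R.num := ⟨C v, by rw [mul_comm]; exact sub_eq_zero.mp h⟩
    have hdenom : R.denom = 1 := R.monic_denom.isUnit_iff.mp
      (R.isCoprime_num_denom.symm.isUnit_of_dvd' dvd_rfl hdvd)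
    rw [fiberPoly_coe, hdenom, mul_one, sub_eq_zero] at h
    exact hR (by simp [degree, h, hdenom])

lemma not_isRoot_num_of_isRoot_denom {b : K} (hb : R.denom.IsRoot b) : ¬ R.num.IsRoot b := by
  obtain ⟨u, v, huv⟩ := R.isCoprime_num_denom
  intro hn
  simpa [hn.eq_zero, hb.eq_zero] using congrArg (eval b) huv

lemma eval1_coe_eq_iff (b : K) (w : OnePoint K) : eval1 R b = w ↔ (fiberPoly R w).IsRoot b := by
  change (if R.denom.eval b = 0 then ∞ else ((R.num.eval b / R.denom.eval b : K) : OnePoint K))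
    = w ↔ _
  cases w with
  | infty => by_cases hb : R.denom.eval b = 0 <;> simp [hb]
  | coe v =>
    by_cases hb : R.denom.eval b = 0
    · simpa [hb] using not_isRoot_num_of_isRoot_denom hb
    · rw [if_neg hb, OnePoint.coe_eq_coe, div_eq_iff hb]
      simp [sub_eq_zero]

lemma fiberPoly_eval1_coe_eq_of_locDeg_eq (hR : degree R ≠ 0) {a : K}
    (ha : locDeg R a = degree R) :
    fiberPoly R (eval1 R a) = (X - C a) ^ degree R * C (fiberPoly R (eval1 R a)).leadingCoeff := by
  rw [locDeg_coe] at ha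
  refine eq_mul_leadingCoeff_of_monic_of_dvd_of_natDegree_le ((monic_X_sub_C a).pow _) ?_ ?_
  · exact (le_rootMultiplicity_iff (fiberPoly_ne_zero hR _)).mp ha.ge
  · rw [natDegree_pow, natDegree_X_sub_C, mul_one]
    exact natDegree_fiberPoly_le R _

lemma natDegree_fiberPoly_eval1_infty_eq_zero (h : locDeg R ∞ = degree R) :
    (fiberPoly R (eval1 R ∞)).natDegree = 0 := by
  by_cases heq : R.num.natDegree = R.denom.natDegree
  · rw [locDeg_infty_of_natDegree_eq heq] at h
    exact natDegree_eq_zero_of_le_rootMultiplicity_zero_reflect (natDegree_fiberPoly_le R _) h.ge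
  · have hmax : degree R = max R.num.natDegree R.denom.natDegree := rfl
    unfold locDeg pelim at h
    unfold eval1 pelim
    split_ifs at h ⊢ <;> simp only [Option.elim, fiberPoly_coe, fiberPoly_infty, map_zero,
      zero_mul, sub_zero] at h ⊢ <;> omega

theorem preimage_eval1_singleton_eval1 (hR : degree R ≠ 0) {x : OnePoint K}
    (hx : locDeg R x = degree R) : eval1 R ⁻¹' {eval1 R x} = {x} := by
  refine Set.Subset.antisymm (fun z hz => ?_) (by simp)
  rw [Set.mem_preimage, Set.mem_singleton_iff] at hz
  cases x with
  | coe a =>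
    have hfac := fiberPoly_eval1_coe_eq_of_locDeg_eq hR hx
    have hc := leadingCoeff_ne_zero.mpr (fiberPoly_ne_zero hR (eval1 R a))
    cases z with
    | infty =>
      have hlt := natDegree_fiberPoly_eval1_infty_lt hR
      rw [hz, hfac, natDegree_mul_C hc, natDegree_pow, natDegree_X_sub_C, mul_one] at hlt
      exact absurd hlt (lt_irrefl _)
    | coe b =>
      have hroot := (eval1_coe_eq_iff b _).mp hz
      rw [hfac] at hroot
      have hba : b = a := by simpa [hc, hR, sub_eq_zero] using hroot
      simp [hba]
  | infty =>
    cases z with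
    | infty => rfl
    | coe b =>
      exfalso
      have hroot := (eval1_coe_eq_iff b _).mp hz
      have hconst := eq_C_of_natDegree_eq_zero (natDegree_fiberPoly_eval1_infty_eq_zero hx)
      rw [hconst, IsRoot, eval_C] at hroot
      exact fiberPoly_ne_zero hR _ (by rw [hconst, hroot, map_zero])

lemma wronskian_denom_num_ne_zero [CharZero K] (hR : degree R ≠ 0) :
    wronskian R.denom R.num ≠ 0 := by
  rw [Ne, R.isCoprime_num_denom.symm.wronskian_eq_zero_iff]
  rintro ⟨hdenom, hnum⟩
  exact hR (by simp [degree, derivative_eq_zero.mp hnum, derivative_eq_zero.mp hdenom])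

lemma natDegree_wronskian_denom_num_le (w : OnePoint K) :
    (wronskian R.denom R.num).natDegree ≤ degree R + (fiberPoly R w).natDegree - 1 := by
  cases w with
  | infty =>
    have := natDegree_wronskian_le R.denom R.num
    have := natDegree_num_le_degree R
    rw [fiberPoly_infty]
    omega
  | coe v =>
    rw [← wronskian_sub_C_mul_self_right R.denom R.num v]
    have := natDegree_wronskian_le R.denom (R.num - C v * R.denom)
    have := natDegree_denom_le_degree R
    rw [fiberPoly_coe]
    omega

lemma pow_sub_one_dvd_wronskian_denom_num {p : K[X]} {n : ℕ} {w : OnePoint K}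
    (h : p ^ n ∣ fiberPoly R w) : p ^ (n - 1) ∣ wronskian R.denom R.num := by
  cases w with
  | infty => exact pow_sub_one_dvd_wronskian_left h _
  | coe v =>
    rw [← wronskian_sub_C_mul_self_right R.denom R.num v]
    exact pow_sub_one_dvd_wronskian_right h _

lemma card_mul_le_natDegree_wronskian [CharZero K] (hR : degree R ≠ 0) (s : Finset K)
    (hs : ∀ a ∈ s, locDeg R a = degree R) :
    s.card * (degree R - 1) ≤ (wronskian R.denom R.num).natDegree := by
  have hdvd : ∏ a ∈ s, (X - C a) ^ (degree R - 1) ∣ wronskian R.denom R.num := by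
    refine Finset.prod_dvd_of_coprime (fun a _ b _ hab => ?_) fun a ha => ?_
    · exact (isCoprime_X_sub_C_of_isUnit_sub (sub_ne_zero.mpr hab).isUnit).pow
    · exact pow_sub_one_dvd_wronskian_denom_num
        ⟨_, fiberPoly_eval1_coe_eq_of_locDeg_eq hR (hs a ha)⟩
  calc s.card * (degree R - 1) = (∏ a ∈ s, (X - C a) ^ (degree R - 1)).natDegree := by
        rw [natDegree_prod_of_monic _ _ fun a _ => (monic_X_sub_C a).pow _]
        simp [natDegree_pow]
    _ ≤ (wronskian R.denom R.num).natDegree :=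
        natDegree_le_of_dvd hdvd (wronskian_denom_num_ne_zero hR)

theorem card_le_two_of_locDeg_eq_degree [CharZero K] (hR : 2 ≤ degree R)
    (T : Finset (OnePoint K)) (hT : ∀ x ∈ T, locDeg R x = degree R) : T.card ≤ 2 := by
  have hfinite := card_mul_le_natDegree_wronskian (by omega) T.eraseNone
    fun a ha => hT _ (Finset.mem_eraseNone.mp ha)
  have hW := natDegree_wronskian_denom_num_le (R := R) (eval1 R ∞)
  have hD : 0 < degree R - 1 := by omega
  by_cases hinf : ∞ ∈ T
  · rw [natDegree_fiberPoly_eval1_infty_eq_zero (hT _ hinf)] at hW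
    have hcard : T.eraseNone.card = T.card - 1 := Finset.card_eraseNone_of_mem hinf
    have : T.eraseNone.card ≤ 1 := Nat.le_of_mul_le_mul_right (by omega) hD
    omega
  · have := natDegree_fiberPoly_eval1_infty_lt (R := R) (by omega)
    have hcard : T.eraseNone.card = T.card := Finset.card_eraseNone_of_not_mem hinf
    have : T.eraseNone.card ≤ 2 := Nat.le_of_mul_le_mul_right (by omega) hD
    omega

theorem preimage_eq_singleton_of_locDeg_orbit_eq [CharZero K] (hR : 2 ≤ degree R)
    {y : OnePoint K} (h₀ : locDeg R y = degree R) (h₁ : locDeg R (eval1 R y) = degree R)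
    (h₂ : locDeg R (eval1 R (eval1 R y)) = degree R) :
    eval1 R ⁻¹' {y} = {y} ∨ (eval1 R)^[2] ⁻¹' {y} = {y} := by
  have hfiber {x : OnePoint K} (hx : locDeg R x = degree R) : eval1 R ⁻¹' {eval1 R x} = {x} :=
    preimage_eval1_singleton_eval1 (by omega) hx
  by_cases e₀₁ : eval1 R y = y
  · left
    simpa [e₀₁] using hfiber h₀
  by_cases e₁₂ : eval1 R (eval1 R y) = eval1 R y
  · have hy : y ∈ eval1 R ⁻¹' {eval1 R (eval1 R y)} := by simp [e₁₂]
    rw [hfiber h₁] at hy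
    exact absurd hy.symm e₀₁
  by_cases e₀₂ : eval1 R (eval1 R y) = y
  · right
    have h₁' := hfiber h₁
    rw [e₀₂] at h₁'
    rw [show (eval1 R)^[2] = eval1 R ∘ eval1 R from rfl, Set.preimage_comp, h₁', hfiber h₀]
  exfalso
  have hcard := card_le_two_of_locDeg_eq_degree hR {y, eval1 R y, eval1 R (eval1 R y)}
    (by simp [h₀, h₁, h₂])
  have hthree : ({y, eval1 R y, eval1 R (eval1 R y)} : Finset (OnePoint K)).card = 3 :=
    Finset.card_eq_three.mpr ⟨_, _, _, Ne.symm e₀₁, Ne.symm e₀₂, e₁₂ ∘ Eq.symm, rfl⟩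
  omega

end P1

theorem iterate_local_degree_lt_general
    {K : Type*} [Field K] [CharZero K]
    (R : RatFunc K) (D : ℕ) (hD : 2 ≤ D) (hdeg : P1.degree R = D)
    (E : Set (OnePoint K))
    (hE : E = {x : OnePoint K | P1.eval1 R ⁻¹' {x} = {x} ∨
                (P1.eval1 R)^[2] ⁻¹' {x} = {x}}) :
    ∃ m : ℕ, 1 ≤ m ∧ ∀ y : OnePoint K, y ∉ E → P1.locDegIter R m y < D ^ m := by
  subst hE hdeg
  refine ⟨3, by norm_num, fun y hy => ?_⟩
  by_contra hge
  have hfull : ∀ k ∈ Finset.range 3, P1.locDeg R ((P1.eval1 R)^[k] y) = P1.degree R := by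
    by_contra! ⟨k, hk, hne⟩
    have hlt : P1.locDegIter R 3 y < P1.degree R ^ (Finset.range 3).card :=
      Finset.prod_lt_pow_card (fun i _ => P1.locDeg_le_degree R _)
        ⟨k, hk, (P1.locDeg_le_degree R _).lt_of_ne hne⟩
    exact hge (by simpa using hlt)
  exact hy (P1.preimage_eq_singleton_of_locDeg_orbit_eq hD (hfull 0 (by simp))
    (hfull 1 (by simp)) (by simpa using hfull 2 (by simp)))

/-- After replacing `R` by a suitable iterate `R^m` (`m ≥ 1`),
every point `y ∈ ℙ¹(K)` outside the exceptional set `E` (points totally invariant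
under `R` or `R²`) has local degree `deg_{R^m}(y) < D^m`. -/
theorem iterate_local_degree_lt
    {K : Type*} [Field K] [IsAlgClosed K] [CharZero K]
    (R : RatFunc K) (D : ℕ) (hD : 2 ≤ D) (hdeg : P1.degree R = D)
    (E : Set (OnePoint K))
    (hE : E = {x : OnePoint K | P1.eval1 R ⁻¹' {x} = {x} ∨
                (P1.eval1 R)^[2] ⁻¹' {x} = {x}}) :
    ∃ m : ℕ, 1 ≤ m ∧ ∀ y : OnePoint K, y ∉ E → P1.locDegIter R m y < D ^ m :=
  iterate_local_degree_lt_general R D hD hdeg E hE
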